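/- Let ρ ≥ 0 with ρ < 1 and let u ∈ (0, 1/2]. Then C(u,u;ρ) ≤ 2u·g(u;ρ), i.e. Φ₂(Φ⁻¹(u),Φ⁻¹(u);ρ) ≤ 2u·Φ(√((1−ρ)/(1+ρ))·Φ⁻¹(u)). -/

import Mathlib

open MeasureTheory Real Set

/-- Standard normal density φ. -/
noncomputable def stdPdf (x : ℝ) : ℝ :=
  (1 / Real.sqrt (2 * Real.pi)) * Real.exp (-x ^ 2 / 2)

/-- Standard normal distribution function Φ. -/
noncomputable def stdCdf (h : ℝ) : ℝ := ∫ x in Set.Iio h, stdPdf x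

/-- Inverse Φ⁻¹ of the standard normal distribution function (on (0,1)). -/
noncomputable def stdQuantile : ℝ → ℝ := Function.invFun stdCdf

/-- Bivariate standard normal density φ₂ with correlation ρ. -/
noncomputable def binPdf (x y ρ : ℝ) : ℝ :=
  (1 / (2 * Real.pi * Real.sqrt (1 - ρ ^ 2))) *
    Real.exp (-(x ^ 2 - 2 * ρ * x * y + y ^ 2) / (2 * (1 - ρ ^ 2)))

/-- Bivariate standard normal distribution function Φ₂. -/
noncomputable def binCdf (h k ρ : ℝ) : ℝ :=
  ∫ x in Set.Iio h, ∫ y in Set.Iio k, binPdf x y ρ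

/-- The bivariate normal copula C(u,v;ρ) = Φ₂(Φ⁻¹(u),Φ⁻¹(v);ρ). -/
noncomputable def normCopula (u v ρ : ℝ) : ℝ :=
  binCdf (stdQuantile u) (stdQuantile v) ρ

/-- g(u;ρ) = Φ(√((1−ρ)/(1+ρ))·Φ⁻¹(u)). -/
noncomputable def gFun (u ρ : ℝ) : ℝ :=
  stdCdf (Real.sqrt ((1 - ρ) / (1 + ρ)) * stdQuantile u)

/-!
Write `h = Φ⁻¹(u)` and `c = √((1-ρ)/(1+ρ))`. Since `φ₂(x,y;ρ) = φ₂(y,x;ρ)`, the square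
`(-∞,h)²` splits into two triangles of equal mass, so
`C(u,u;ρ) = 2 ∫_{t<h} ∫_{s<t} φ₂(t,s;ρ) ds dt`.
Given the first coordinate `t`, the second is `N(ρt, 1-ρ²)`, so the inner integral is
`φ(t) Φ((1-ρ)t/√(1-ρ²)) = φ(t) Φ(ct)`. As `c ≥ 0`, `Φ(ct) ≤ Φ(ch)` for `t < h`, and what remains
is `∫_{t<h} φ = u`.
-/

open Filter Function Topology

section StandardNormal

lemma stdPdf_nonneg (x : ℝ) : 0 ≤ stdPdf x := by
  unfold stdPdf; positivity

lemma continuous_stdPdf : Continuous stdPdf := by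
  unfold stdPdf; fun_prop

lemma stdPdf_eq_mul_exp_neg_mul_sq :
    stdPdf = fun x => (√(2 * π))⁻¹ * exp (-(1 / 2) * x ^ 2) := by
  funext x; unfold stdPdf; ring_nf

lemma integrable_stdPdf : Integrable stdPdf := by
  rw [stdPdf_eq_mul_exp_neg_mul_sq]
  exact (integrable_exp_neg_mul_sq (by norm_num)).const_mul _

lemma integral_stdPdf : ∫ x, stdPdf x = 1 := by
  rw [stdPdf_eq_mul_exp_neg_mul_sq, integral_const_mul, integral_gaussian,
    show π / (1 / 2) = 2 * π by ring, inv_mul_cancel₀ (by positivity)]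

lemma stdCdf_nonneg (h : ℝ) : 0 ≤ stdCdf h :=
  setIntegral_nonneg measurableSet_Iio fun x _ => stdPdf_nonneg x

lemma monotone_stdCdf : Monotone stdCdf := fun _ _ hab =>
  setIntegral_mono_set integrable_stdPdf.integrableOn (Eventually.of_forall stdPdf_nonneg)
    (Iio_subset_Iio hab).eventuallyLE

lemma stdCdf_eq_stdCdf_zero_add (b : ℝ) : stdCdf b = stdCdf 0 + ∫ x in (0 : ℝ)..b, stdPdf x := by
  rw [intervalIntegral.integral_Iio_sub_Iio' integrable_stdPdf.integrableOn
    integrable_stdPdf.integrableOn |>.symm]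
  simp [stdCdf]

lemma continuous_stdCdf : Continuous stdCdf := by
  rw [funext stdCdf_eq_stdCdf_zero_add]
  exact continuous_const.add (integrable_stdPdf.continuous_primitive 0)

lemma tendsto_stdCdf_atTop : Tendsto stdCdf atTop (𝓝 1) := by
  have h := (aecover_Iio (l := atTop) tendsto_id).integral_tendsto_of_countably_generated
    integrable_stdPdf
  rwa [integral_stdPdf] at h

lemma tendsto_stdCdf_atBot : Tendsto stdCdf atBot (𝓝 0) :=
  tendsto_integral_Iio_zero tendsto_id

lemma stdCdf_stdQuantile {u : ℝ} (h0 : 0 < u) (h1 : u < 1) : stdCdf (stdQuantile u) = u := by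
  refine Function.invFun_eq ?_
  obtain ⟨b, hb⟩ := (tendsto_stdCdf_atTop.eventually (eventually_gt_nhds h1)).exists
  obtain ⟨a, ha⟩ := (tendsto_stdCdf_atBot.eventually (eventually_lt_nhds h0)).exists
  exact intermediate_value_univ a b continuous_stdCdf ⟨ha.le, hb.le⟩

lemma setIntegral_Iio_stdPdf_mul_stdCdf_le {c : ℝ} (hc : 0 ≤ c) (h : ℝ) :
    ∫ t in Iio h, stdPdf t * stdCdf (c * t) ≤ stdCdf h * stdCdf (c * h) := by
  calc ∫ t in Iio h, stdPdf t * stdCdf (c * t)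
      ≤ ∫ t in Iio h, stdPdf t * stdCdf (c * h) := by
        refine integral_mono_of_nonneg (Eventually.of_forall fun t => ?_)
          (integrable_stdPdf.mul_const _).integrableOn ?_
        · exact mul_nonneg (stdPdf_nonneg t) (stdCdf_nonneg _)
        · filter_upwards [ae_restrict_mem measurableSet_Iio] with t ht
          exact mul_le_mul_of_nonneg_left (monotone_stdCdf (by gcongr; exact ht.le))
            (stdPdf_nonneg t)
    _ = stdCdf h * stdCdf (c * h) := integral_mul_const _ _

end StandardNormal

section AffineSubstitution

variable {s : ℝ}

lemma integral_comp_sub_div (f : ℝ → ℝ) (hs : 0 < s) (m : ℝ) :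
    ∫ x, f ((x - m) / s) = s * ∫ t, f t := by
  rw [integral_sub_right_eq_self (fun x => f (x / s)) m, Measure.integral_comp_div,
    abs_of_pos hs, smul_eq_mul]

lemma setIntegral_Iio_comp_sub_div (f : ℝ → ℝ) (hs : 0 < s) (m y : ℝ) :
    ∫ x in Iio y, f ((x - m) / s) = s * ∫ t in Iio ((y - m) / s), f t := by
  have hpre : (fun x => (x - m) / s) ⁻¹' Iio ((y - m) / s) = Iio y := by
    ext x; simp [div_lt_div_iff_of_pos_right hs]
  rw [← integral_indicator measurableSet_Iio, ← integral_indicator measurableSet_Iio,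
    ← integral_comp_sub_div _ hs m, ← hpre]
  exact integral_congr_ae (Eventually.of_forall fun x => indicator_comp_right _)

end AffineSubstitution

section SymmetricIntegral

variable {f : ℝ → ℝ → ℝ}

lemma measurableSet_le_and_lt (h : ℝ) : MeasurableSet {p : ℝ × ℝ | p.1 ≤ p.2 ∧ p.2 < h} :=
  (measurableSet_le measurable_fst measurable_snd).inter (measurable_snd measurableSet_Iio)

lemma integral_indicator_prodMk_left {S : Set (ℝ × ℝ)} (hS : MeasurableSet S) (x : ℝ) :
    ∫ y, S.indicator (uncurry f) (x, y) = ∫ y in Prod.mk x ⁻¹' S, f x y :=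
  integral_indicator (measurable_prodMk_left hS)

lemma integral_indicator_prodMk_right {S : Set (ℝ × ℝ)} (hS : MeasurableSet S) (y : ℝ) :
    ∫ x, S.indicator (uncurry f) (x, y) = ∫ x in (·, y) ⁻¹' S, f x y :=
  integral_indicator (measurable_prodMk_right hS)

lemma integrable_setIntegral_slice {S : Set (ℝ × ℝ)} (hS : MeasurableSet S)
    (hf : Integrable (uncurry f) (volume.prod volume)) :
    Integrable fun x => ∫ y in Prod.mk x ⁻¹' S, f x y := by
  simpa only [integral_indicator_prodMk_left hS] using (hf.indicator hS).integral_prod_left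

lemma integral_setIntegral_slice_swap {S : Set (ℝ × ℝ)} (hS : MeasurableSet S)
    (hf : Integrable (uncurry f) (volume.prod volume)) :
    ∫ x, ∫ y in Prod.mk x ⁻¹' S, f x y = ∫ y, ∫ x in (·, y) ⁻¹' S, f x y := by
  simp only [← integral_indicator_prodMk_left hS, ← integral_indicator_prodMk_right hS]
  exact integral_integral_swap (hf.indicator hS)

lemma setIntegral_Iio_Ico_swap (hf : Integrable (uncurry f) (volume.prod volume)) (h : ℝ) :
    ∫ x in Iio h, ∫ y in Ico x h, f x y = ∫ y in Iio h, ∫ x in Iio y, f x y := by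
  let S : Set (ℝ × ℝ) := {p | p.1 ≤ p.2 ∧ p.2 < h}
  have hslice : ∀ y < h, (·, y) ⁻¹' S = Iic y := fun y hy => by ext x; simp [S, hy]
  calc ∫ x in Iio h, ∫ y in Ico x h, f x y = ∫ x, ∫ y in Prod.mk x ⁻¹' S, f x y :=
        setIntegral_eq_integral_of_forall_compl_eq_zero fun x hx => by
          rw [Ico_eq_empty (by simpa using hx), Measure.restrict_empty, integral_zero_measure]
    _ = ∫ y, ∫ x in (·, y) ⁻¹' S, f x y :=
        integral_setIntegral_slice_swap (measurableSet_le_and_lt h) hf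
    _ = ∫ y in Iio h, ∫ x in (·, y) ⁻¹' S, f x y :=
        (setIntegral_eq_integral_of_forall_compl_eq_zero fun y hy => by
          rw [show (·, y) ⁻¹' S = ∅ by ext x; simp [S, show h ≤ y by simpa using hy],
            Measure.restrict_empty, integral_zero_measure]).symm
    _ = ∫ y in Iio h, ∫ x in Iio y, f x y := setIntegral_congr_fun measurableSet_Iio fun y hy => by
        rw [hslice y hy, setIntegral_congr_set Iio_ae_eq_Iic]

lemma setIntegral_Iio_Iio_of_comm (hf : Integrable (uncurry f) (volume.prod volume))
    (hcomm : ∀ x y, f x y = f y x) (h : ℝ) :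
    ∫ x in Iio h, ∫ y in Iio h, f x y = 2 * ∫ x in Iio h, ∫ y in Iio x, f x y := by
  have hsplit : ∀ᵐ x ∂volume.restrict (Iio h),
      ∫ y in Iio h, f x y = (∫ y in Iio x, f x y) + ∫ y in Ico x h, f x y := by
    filter_upwards [ae_restrict_mem measurableSet_Iio, ae_restrict_of_ae hf.prod_right_ae]
      with x hx (hfx : Integrable (f x))
    rw [← setIntegral_union ((Iio_disjoint_Ici le_rfl).mono_right Ico_subset_Ici_self)
      measurableSet_Ico hfx.integrableOn hfx.integrableOn, Iio_union_Ico_eq_Iio hx.le]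
  have hlower : Integrable fun x => ∫ y in Iio x, f x y :=
    integrable_setIntegral_slice (S := {p | p.2 < p.1})
      (measurableSet_lt measurable_snd measurable_fst) hf
  have hupper : Integrable fun x => ∫ y in Ico x h, f x y :=
    integrable_setIntegral_slice (measurableSet_le_and_lt h) hf
  rw [integral_congr_ae hsplit, integral_add hlower.integrableOn hupper.integrableOn,
    setIntegral_Iio_Ico_swap hf, two_mul]
  congr 1
  exact setIntegral_congr_fun measurableSet_Iio fun y _ =>
    setIntegral_congr_fun measurableSet_Iio fun x _ => hcomm x y

end SymmetricIntegral

section BivariateNormal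

variable {ρ : ℝ}

lemma binPdf_nonneg (x y : ℝ) : 0 ≤ binPdf x y ρ := by
  unfold binPdf; positivity

lemma binPdf_comm (x y : ℝ) : binPdf x y ρ = binPdf y x ρ := by
  unfold binPdf; ring_nf

lemma continuous_binPdf : Continuous fun p : ℝ × ℝ => binPdf p.1 p.2 ρ := by
  unfold binPdf; fun_prop

lemma binPdf_eq_stdPdf_mul (hρ : ρ ∈ Ioo (-1 : ℝ) 1) (x y : ℝ) :
    binPdf x y ρ =
      stdPdf x * ((√(1 - ρ ^ 2))⁻¹ * stdPdf ((y - ρ * x) / √(1 - ρ ^ 2))) := by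
  have hρ2 : 0 < 1 - ρ ^ 2 := by nlinarith [hρ.1, hρ.2]
  have hexp : exp (-x ^ 2 / 2) * exp (-((y - ρ * x) ^ 2 / (1 - ρ ^ 2)) / 2)
      = exp (-(x ^ 2 - 2 * ρ * x * y + y ^ 2) / (2 * (1 - ρ ^ 2))) := by
    rw [← exp_add]
    congr 1
    field_simp
    ring
  have h2π : √(2 * π) * √(2 * π) = 2 * π := mul_self_sqrt (by positivity)
  unfold binPdf stdPdf
  rw [div_pow, sq_sqrt hρ2.le, ← hexp]
  field_simp
  linear_combination h2π

lemma integrable_binPdf_slice (hρ : ρ ∈ Ioo (-1 : ℝ) 1) (x : ℝ) :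
    Integrable fun y => binPdf x y ρ := by
  have hs : 0 < √(1 - ρ ^ 2) := sqrt_pos.mpr (by nlinarith [hρ.1, hρ.2])
  simp_rw [binPdf_eq_stdPdf_mul hρ x]
  exact (((integrable_stdPdf.comp_div hs.ne').comp_sub_right (ρ * x)).const_mul _).const_mul _

lemma integral_binPdf_slice (hρ : ρ ∈ Ioo (-1 : ℝ) 1) (x : ℝ) :
    ∫ y, binPdf x y ρ = stdPdf x := by
  have hs : 0 < √(1 - ρ ^ 2) := sqrt_pos.mpr (by nlinarith [hρ.1, hρ.2])
  simp_rw [binPdf_eq_stdPdf_mul hρ x]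
  rw [integral_const_mul, integral_const_mul, integral_comp_sub_div stdPdf hs (ρ * x),
    integral_stdPdf, mul_one, inv_mul_cancel₀ hs.ne', mul_one]

lemma integrable_binPdf (hρ : ρ ∈ Ioo (-1 : ℝ) 1) :
    Integrable (uncurry fun x y => binPdf x y ρ) (volume.prod volume) := by
  refine (integrable_prod_iff continuous_binPdf.aestronglyMeasurable).mpr
    ⟨Eventually.of_forall (integrable_binPdf_slice hρ), ?_⟩
  simpa only [norm_of_nonneg (binPdf_nonneg _ _), integral_binPdf_slice hρ]
    using integrable_stdPdf

lemma setIntegral_Iio_binPdf_self (hρ : ρ ∈ Ioo (-1 : ℝ) 1) (t : ℝ) :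
    ∫ y in Iio t, binPdf t y ρ = stdPdf t * stdCdf (√((1 - ρ) / (1 + ρ)) * t) := by
  have hρ2 : 0 < 1 - ρ ^ 2 := by nlinarith [hρ.1, hρ.2]
  have hs : 0 < √(1 - ρ ^ 2) := sqrt_pos.mpr hρ2
  have hslope : (t - ρ * t) / √(1 - ρ ^ 2) = √((1 - ρ) / (1 + ρ)) * t := by
    rw [show (1 - ρ) / (1 + ρ) = (1 - ρ) ^ 2 / (1 - ρ ^ 2) by
        field_simp [show 1 + ρ ≠ 0 by linarith [hρ.1]]; ring,
      sqrt_div' _ hρ2.le, sqrt_sq (by linarith [hρ.2])]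
    ring
  simp_rw [binPdf_eq_stdPdf_mul hρ t]
  rw [integral_const_mul, integral_const_mul, setIntegral_Iio_comp_sub_div stdPdf hs (ρ * t) t,
    hslope, inv_mul_cancel_left₀ hs.ne']
  rfl

lemma binCdf_self (hρ : ρ ∈ Ioo (-1 : ℝ) 1) (h : ℝ) :
    binCdf h h ρ = 2 * ∫ t in Iio h, stdPdf t * stdCdf (√((1 - ρ) / (1 + ρ)) * t) := by
  rw [binCdf, setIntegral_Iio_Iio_of_comm (integrable_binPdf hρ) binPdf_comm]
  simp_rw [setIntegral_Iio_binPdf_self hρ]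

end BivariateNormal

theorem upper_bound_2ug (ρ u : ℝ) (hρ0 : 0 ≤ ρ) (hρ1 : ρ < 1)
    (hu : u ∈ Set.Ioc (0 : ℝ) (1 / 2)) :
    normCopula u u ρ ≤ 2 * u * gFun u ρ := by
  have hcdf : stdCdf (stdQuantile u) = u := stdCdf_stdQuantile hu.1 (by linarith [hu.2])
  calc normCopula u u ρ
      = 2 * ∫ t in Iio (stdQuantile u), stdPdf t * stdCdf (√((1 - ρ) / (1 + ρ)) * t) :=
        binCdf_self ⟨by linarith, hρ1⟩ _
    _ ≤ 2 * (stdCdf (stdQuantile u) * gFun u ρ) := by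
        gcongr; exact setIntegral_Iio_stdPdf_mul_stdCdf_le (sqrt_nonneg _) _
    _ = 2 * u * gFun u ρ := by rw [hcdf, mul_assoc]
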